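/- Consider the pathwise minimax Q-learning system (Q_k) and the upper comparison system (Q_k^U) driven by the same noise sequence (w_k). If Q_0^U(s,a,b) ≥ Q_0(s,a,b) for all (s,a,b) ∈ S × A × B, then Q_k^U(s,a,b) ≥ Q_k(s,a,b) for all k ≥ 0 and all (s,a,b) ∈ S × A × B. -/

import Mathlib

/-!
Subtracting the Bellman equation `Qstar = F Qstar` from the update writes the error `Q k - Qstar`
in the same affine form as the upper comparison system, with the bootstrap term
`maxMin (Q k) s' - maxMin Qstar s'` in place of `(QU k - Qstar) (s', τ k s', μstar (s', τ k s'))`.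
The first is at most the second once `Q k ≤ QU k`: evaluating the inner minimum of `Q k` at the
minimiser `μstar` of `Qstar` bounds the gap by `(Q k - Qstar) (s', a, μstar (s', a))`, which `τ k`
maximises. As `1 - α d`, `α d γ` and `P` are nonnegative, the order propagates by induction.
-/

open Finset

theorem Finset.sup'_inf'_sub_sup'_inf'_le {ι κ α : Type*} [AddCommGroup α] [LinearOrder α]
    [IsOrderedAddMonoid α] {s : Finset ι} {t : Finset κ} (hs : s.Nonempty) (ht : t.Nonempty)
    (f g : ι → κ → α) {μ : ι → κ} (hμt : ∀ i ∈ s, μ i ∈ t)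
    (hμ : ∀ i ∈ s, ∀ j ∈ t, g i (μ i) ≤ g i j) {c : α}
    (hc : ∀ i ∈ s, f i (μ i) - g i (μ i) ≤ c) :
    s.sup' hs (fun i => t.inf' ht (f i)) - s.sup' hs (fun i => t.inf' ht (g i)) ≤ c := by
  rw [sub_le_iff_le_add']
  refine sup'_le hs _ fun i hi => ?_
  calc t.inf' ht (f i) ≤ f i (μ i) := inf'_le _ (hμt i hi)
    _ ≤ g i (μ i) + c := sub_le_iff_le_add'.mp (hc i hi)
    _ ≤ t.inf' ht (g i) + c := add_le_add_left (le_inf' ht _ (hμ i hi)) c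
    _ ≤ s.sup' hs (fun i => t.inf' ht (g i)) + c :=
      add_le_add_left (le_sup' (fun i => t.inf' ht (g i)) hi) c

section QLearning

variable {S A B : Type*} [Fintype A] [Fintype B] [Nonempty A] [Nonempty B]

noncomputable def maxMin (Q : S × A × B → ℝ) (s : S) : ℝ :=
  univ.sup' univ_nonempty fun a => univ.inf' univ_nonempty fun b => Q (s, a, b)

theorem maxMin_sub_maxMin_le {Q Q' : S × A × B → ℝ} {μ : S × A → B}
    (hμ : ∀ s a b, Q' (s, a, μ (s, a)) ≤ Q' (s, a, b)) {s : S} {c : ℝ}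
    (hc : ∀ a, Q (s, a, μ (s, a)) - Q' (s, a, μ (s, a)) ≤ c) :
    maxMin Q s - maxMin Q' s ≤ c :=
  sup'_inf'_sub_sup'_inf'_le _ _ (fun a b => Q (s, a, b)) (fun a b => Q' (s, a, b))
    (fun _ _ => mem_univ _) (fun a _ b _ => hμ s a b) fun a _ => hc a

theorem q_learning_update_sub_fixedPoint [Fintype S] (P : S × A × B → S → ℝ)
    (R : S × A × B → ℝ) (γ α : ℝ) (d w : S × A × B → ℝ) {Qstar Q Q' : S × A × B → ℝ}
    {x : S × A × B}
    (hQstar : Qstar x = R x + γ * ∑ s', P x s' * maxMin Qstar s')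
    (hQ : Q' x = Q x + α * (d x * (R x + γ * (∑ s', P x s' * maxMin Q s') - Q x) + w x)) :
    Q' x - Qstar x = (1 - α * d x) * (Q x - Qstar x)
      + α * d x * γ * ∑ s', P x s' * (maxMin Q s' - maxMin Qstar s') + α * w x := by
  simp only [mul_sub, sum_sub_distrib]
  rw [hQ]
  linear_combination -(α * d x) * hQstar

end QLearning

theorem upper_comparison_system_bounds_q_learning_general {S A B : Type*}
    [Fintype S] [Fintype A] [Fintype B] [Nonempty A] [Nonempty B]
    (P : S × A × B → S → ℝ) (hP0 : ∀ x s', 0 ≤ P x s')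
    (R : S × A × B → ℝ) (γ : ℝ) (hγ0 : 0 ≤ γ)
    (Qstar : S × A × B → ℝ)
    (hQstar : ∀ x : S × A × B, Qstar x = R x + γ * ∑ s' : S, P x s' *
      (Finset.univ.sup' Finset.univ_nonempty fun a' : A =>
        Finset.univ.inf' Finset.univ_nonempty fun b' : B => Qstar (s', a', b')))
    (α : ℝ) (hα : α ∈ Set.Ioo (0 : ℝ) 1)
    (d : S × A × B → ℝ) (hd : ∀ x, d x ∈ Set.Ioo (0 : ℝ) 1)
    (w : ℕ → S × A × B → ℝ)
    -- the pathwise minimax Q-learning system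
    (Q : ℕ → S × A × B → ℝ)
    (hQ : ∀ k (x : S × A × B), Q (k + 1) x = Q k x + α *
      (d x * (R x + γ * (∑ s' : S, P x s' *
        (Finset.univ.sup' Finset.univ_nonempty fun a' : A =>
          Finset.univ.inf' Finset.univ_nonempty fun b' : B => Q k (s', a', b'))) - Q k x)
        + w k x))
    -- μstar (s, a) minimizes b ↦ Qstar (s, a, b)
    (μstar : S × A → B)
    (hμstar : ∀ s a b, Qstar (s, a, μstar (s, a)) ≤ Qstar (s, a, b))
    -- the upper comparison system
    (QU : ℕ → S × A × B → ℝ)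
    -- τ k s maximizes a ↦ QU k (s, a, μstar (s, a)) - Qstar (s, a, μstar (s, a))
    (τ : ℕ → S → A)
    (hτ : ∀ k s a,
      QU k (s, a, μstar (s, a)) - Qstar (s, a, μstar (s, a)) ≤
        QU k (s, τ k s, μstar (s, τ k s)) - Qstar (s, τ k s, μstar (s, τ k s)))
    (hQU : ∀ k (x : S × A × B), QU (k + 1) x - Qstar x =
      (1 - α * d x) * (QU k x - Qstar x)
      + α * d x * γ * (∑ s' : S, P x s' *
          (QU k (s', τ k s', μstar (s', τ k s'))
            - Qstar (s', τ k s', μstar (s', τ k s'))))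
      + α * w k x)
    (h0 : ∀ x, Q 0 x ≤ QU 0 x) :
    ∀ k x, Q k x ≤ QU k x := by
  intro k
  induction k with
  | zero => exact h0
  | succ k ih =>
    intro x
    have hgap (s' : S) : maxMin (Q k) s' - maxMin Qstar s' ≤
        QU k (s', τ k s', μstar (s', τ k s')) - Qstar (s', τ k s', μstar (s', τ k s')) :=
      maxMin_sub_maxMin_le hμstar fun a => (sub_le_sub_right (ih _) _).trans (hτ k s' a)
    obtain ⟨hα0, hα1⟩ := hα
    obtain ⟨hd0, hd1⟩ := hd x
    have hαd : 0 ≤ 1 - α * d x := by nlinarith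
    have : Q (k + 1) x - Qstar x ≤ QU (k + 1) x - Qstar x := by
      rw [q_learning_update_sub_fixedPoint P R γ α d (w k) (hQstar x) (hQ k x), hQU k x]
      gcongr (1 - α * d x) * (?_ - _) + α * d x * γ * ∑ s', P x s' * ?_ + _ with s'
      · exact ih x
      · exact hP0 x s'
      · exact hgap s'
    linarith

theorem upper_comparison_system_bounds_q_learning {S A B : Type*}
    [Fintype S] [Fintype A] [Fintype B] [Nonempty S] [Nonempty A] [Nonempty B]
    (P : S × A × B → S → ℝ) (hP0 : ∀ x s', 0 ≤ P x s') (hP1 : ∀ x, ∑ s' : S, P x s' = 1)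
    (R : S × A × B → ℝ) (γ : ℝ) (hγ0 : 0 ≤ γ) (hγ1 : γ < 1)
    (Qstar : S × A × B → ℝ)
    (hQstar : ∀ x : S × A × B, Qstar x = R x + γ * ∑ s' : S, P x s' *
      (Finset.univ.sup' Finset.univ_nonempty fun a' : A =>
        Finset.univ.inf' Finset.univ_nonempty fun b' : B => Qstar (s', a', b')))
    (α : ℝ) (hα : α ∈ Set.Ioo (0 : ℝ) 1)
    (d : S × A × B → ℝ) (hd : ∀ x, d x ∈ Set.Ioo (0 : ℝ) 1)
    (w : ℕ → S × A × B → ℝ)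
    -- the pathwise minimax Q-learning system
    (Q : ℕ → S × A × B → ℝ)
    (hQ : ∀ k (x : S × A × B), Q (k + 1) x = Q k x + α *
      (d x * (R x + γ * (∑ s' : S, P x s' *
        (Finset.univ.sup' Finset.univ_nonempty fun a' : A =>
          Finset.univ.inf' Finset.univ_nonempty fun b' : B => Q k (s', a', b'))) - Q k x)
        + w k x))
    -- μstar (s, a) minimizes b ↦ Qstar (s, a, b)
    (μstar : S × A → B)
    (hμstar : ∀ s a b, Qstar (s, a, μstar (s, a)) ≤ Qstar (s, a, b))
    -- the upper comparison system
    (QU : ℕ → S × A × B → ℝ)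
    -- τ k s maximizes a ↦ QU k (s, a, μstar (s, a)) - Qstar (s, a, μstar (s, a))
    (τ : ℕ → S → A)
    (hτ : ∀ k s a,
      QU k (s, a, μstar (s, a)) - Qstar (s, a, μstar (s, a)) ≤
        QU k (s, τ k s, μstar (s, τ k s)) - Qstar (s, τ k s, μstar (s, τ k s)))
    (hQU : ∀ k (x : S × A × B), QU (k + 1) x - Qstar x =
      (1 - α * d x) * (QU k x - Qstar x)
      + α * d x * γ * (∑ s' : S, P x s' *
          (QU k (s', τ k s', μstar (s', τ k s'))
            - Qstar (s', τ k s', μstar (s', τ k s'))))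
      + α * w k x)
    (h0 : ∀ x, Q 0 x ≤ QU 0 x) :
    ∀ k x, Q k x ≤ QU k x :=
  upper_comparison_system_bounds_q_learning_general P hP0 R γ hγ0 Qstar hQstar α hα d hd w Q hQ
    μstar hμstar QU τ hτ hQU h0
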